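/- The connected double diamond graph cannot occur as an induced subgraph of the enhanced conflict graph of any multicast switch traffic pattern. -/

import Mathlib

/-- A subflow of a multicast traffic pattern: an input, a fanout set of outputs,
and a particular output in the fanout. -/
structure Subflow (I O : Type*) where
  inp : I
  fanout : Set O
  out : O
  mem : out ∈ fanout

/-- The enhanced conflict graph: two distinct subflows are adjacent iff they have
the same output, or the same input but different fanout sets. -/
def enhancedConflictGraph (I O : Type*) : SimpleGraph (Subflow I O) where
  Adj a b := a ≠ b ∧ (a.out = b.out ∨ (a.inp = b.inp ∧ a.fanout ≠ b.fanout))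
  symm := by
    constructor
    rintro a b ⟨hne, h | ⟨h1, h2⟩⟩
    · exact ⟨hne.symm, Or.inl h.symm⟩
    · exact ⟨hne.symm, Or.inr ⟨h1.symm, h2.symm⟩⟩
  loopless := by constructor; rintro a ⟨hne, _⟩; exact hne rfl

/-- The connected double diamond: two diamonds (K₄ minus an edge) `{A,B,C,G}`
(missing edge `BG`) and `{C,D,E,F}` (missing edge `DF`) sharing the central
vertex `C`; vertices `A,…,G` are `0,…,6`. -/
def connectedDoubleDiamond : SimpleGraph (Fin 7) :=
  SimpleGraph.fromRel (fun a b =>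
    (a, b) ∈ [((0 : Fin 7), (1 : Fin 7)), (0, 2), (0, 6), (1, 2), (2, 6),
      (2, 3), (2, 4), (2, 5), (3, 4), (4, 5)])

/-!
Two non-adjacent distinct subflows have different outputs, and if they share an input they
share a fanout. Hence among pairwise non-adjacent neighbours of a vertex `c` at most one shares
the output of `c`, and all others share its input. Moreover, a vertex adjacent to two of three
pairwise non-adjacent subflows with a common input conflicts with one of the two through its
input and fanout, hence is adjacent to the third as well.

In the double diamond the centre `C` has the four pairwise non-adjacent neighbours `B, D, F, G`.
If `D` and `F` share the input of `C`, so does `B` or `G`, and `E`, adjacent to `D` and `F`,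
would be adjacent to it. Otherwise `B` and `G` share the input of `C`, together with `D` or
`F`, and then `A` would be adjacent to that one.
-/

namespace enhancedConflictGraph

variable {I O : Type*} {x y z w : Subflow I O}

theorem out_ne_of_compl_adj (h : (enhancedConflictGraph I O)ᶜ.Adj x y) : x.out ≠ y.out :=
  fun hout => h.2 ⟨h.1, Or.inl hout⟩

theorem fanout_eq_of_compl_adj (h : (enhancedConflictGraph I O)ᶜ.Adj x y)
    (hinp : x.inp = y.inp) : x.fanout = y.fanout :=
  by_contra fun hfan => h.2 ⟨h.1, Or.inr ⟨hinp, hfan⟩⟩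

theorem inp_eq_and_fanout_ne_or_of_adj_of_adj (hy : (enhancedConflictGraph I O).Adj x y)
    (hz : (enhancedConflictGraph I O).Adj x z) (hyz : (enhancedConflictGraph I O)ᶜ.Adj y z) :
    (x.inp = y.inp ∧ x.fanout ≠ y.fanout) ∨ (x.inp = z.inp ∧ x.fanout ≠ z.fanout) := by
  rcases hy.2 with hy | hy
  · rcases hz.2 with hz | hz
    · exact absurd (hy.symm.trans hz) (out_ne_of_compl_adj hyz)
    · exact Or.inr hz
  · exact Or.inl hy

theorem inp_eq_or_inp_eq_of_adj_of_adj (hy : (enhancedConflictGraph I O).Adj x y)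
    (hz : (enhancedConflictGraph I O).Adj x z) (hyz : (enhancedConflictGraph I O)ᶜ.Adj y z) :
    x.inp = y.inp ∨ x.inp = z.inp :=
  (inp_eq_and_fanout_ne_or_of_adj_of_adj hy hz hyz).imp And.left And.left

theorem adj_of_adj_of_adj_of_inp_eq (hyz : (enhancedConflictGraph I O)ᶜ.Adj y z)
    (hyw : (enhancedConflictGraph I O)ᶜ.Adj y w) (hzw : (enhancedConflictGraph I O)ᶜ.Adj z w)
    (hy : y.inp = w.inp) (hz : z.inp = w.inp) (hxy : (enhancedConflictGraph I O).Adj x y)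
    (hxz : (enhancedConflictGraph I O).Adj x z) : (enhancedConflictGraph I O).Adj x w := by
  have hxw : x ≠ w := by
    rintro rfl
    exact hyw.2 hxy.symm
  rcases inp_eq_and_fanout_ne_or_of_adj_of_adj hxy hxz hyz with ⟨hinp, hfan⟩ | ⟨hinp, hfan⟩
  · refine ⟨hxw, Or.inr ⟨hinp.trans hy, fun h => hfan ?_⟩⟩
    exact h.trans (fanout_eq_of_compl_adj hyw hy).symm
  · refine ⟨hxw, Or.inr ⟨hinp.trans hz, fun h => hfan ?_⟩⟩
    exact h.trans (fanout_eq_of_compl_adj hzw hz).symm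

end enhancedConflictGraph

instance : DecidableRel connectedDoubleDiamond.Adj := fun a b =>
  decidable_of_iff _ (SimpleGraph.fromRel_adj _ a b).symm

open enhancedConflictGraph in
theorem isEmpty_connectedDoubleDiamond_embedding_enhancedConflictGraph {I O : Type*} :
    IsEmpty (connectedDoubleDiamond ↪g enhancedConflictGraph I O) := by
  refine ⟨fun e => ?_⟩
  have adj {a b} (h : connectedDoubleDiamond.Adj a b) :
      (enhancedConflictGraph I O).Adj (e a) (e b) :=
    e.map_adj_iff.2 h
  have nonadj {a b} (h : connectedDoubleDiamondᶜ.Adj a b) :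
      (enhancedConflictGraph I O)ᶜ.Adj (e a) (e b) :=
    ⟨e.injective.ne h.1, fun hab => h.2 (e.map_adj_iff.1 hab)⟩
  have inpC {a b} (ha : connectedDoubleDiamond.Adj 2 a) (hb : connectedDoubleDiamond.Adj 2 b)
      (hab : connectedDoubleDiamondᶜ.Adj a b) : (e 2).inp = (e a).inp ∨ (e 2).inp = (e b).inp :=
    inp_eq_or_inp_eq_of_adj_of_adj (adj ha) (adj hb) (nonadj hab)
  have viaE {w} (hw : (e 2).inp = (e w).inp) (hD : (e 2).inp = (e 3).inp)
      (hF : (e 2).inp = (e 5).inp) (hDw : connectedDoubleDiamondᶜ.Adj 3 w)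
      (hFw : connectedDoubleDiamondᶜ.Adj 5 w) (hEw : connectedDoubleDiamondᶜ.Adj 4 w) : False :=
    (nonadj hEw).2 <| adj_of_adj_of_adj_of_inp_eq (nonadj (by decide)) (nonadj hDw) (nonadj hFw)
      (hD.symm.trans hw) (hF.symm.trans hw) (adj (by decide)) (adj (by decide))
  have viaA {v} (hv : (e 2).inp = (e v).inp) (hB : (e 2).inp = (e 1).inp)
      (hG : (e 2).inp = (e 6).inp) (hBv : connectedDoubleDiamondᶜ.Adj 1 v)
      (hGv : connectedDoubleDiamondᶜ.Adj 6 v) (hAv : connectedDoubleDiamondᶜ.Adj 0 v) : False :=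
    (nonadj hAv).2 <| adj_of_adj_of_adj_of_inp_eq (nonadj (by decide)) (nonadj hBv) (nonadj hGv)
      (hB.symm.trans hv) (hG.symm.trans hv) (adj (by decide)) (adj (by decide))
  by_cases hD : (e 2).inp = (e 3).inp <;> by_cases hF : (e 2).inp = (e 5).inp
  · rcases inpC (a := 1) (b := 6) (by decide) (by decide) (by decide) with hB | hG
    · exact viaE hB hD hF (by decide) (by decide) (by decide)
    · exact viaE hG hD hF (by decide) (by decide) (by decide)
  · have hB := (inpC (a := 5) (b := 1) (by decide) (by decide) (by decide)).resolve_left hF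
    have hG := (inpC (a := 5) (b := 6) (by decide) (by decide) (by decide)).resolve_left hF
    exact viaA hD hB hG (by decide) (by decide) (by decide)
  · have hB := (inpC (a := 3) (b := 1) (by decide) (by decide) (by decide)).resolve_left hD
    have hG := (inpC (a := 3) (b := 6) (by decide) (by decide) (by decide)).resolve_left hD
    exact viaA hF hB hG (by decide) (by decide) (by decide)
  · exact (inpC (a := 3) (b := 5) (by decide) (by decide) (by decide)).elim hD hF

/-- The connected double diamond does not occur as an induced subgraph of the
enhanced conflict graph of any multicast switch traffic pattern. -/
theorem stmt4 {I O : Type*} :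
    ¬ ∃ f : Fin 7 → Subflow I O, Function.Injective f ∧
      ∀ a b : Fin 7,
        (enhancedConflictGraph I O).Adj (f a) (f b) ↔ connectedDoubleDiamond.Adj a b := by
  rintro ⟨f, hinj, hf⟩
  exact isEmpty_connectedDoubleDiamond_embedding_enhancedConflictGraph.false
    ⟨⟨f, hinj⟩, hf _ _⟩
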